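/- arXiv:1909.05582 — 2 statements merged into one kernel-verified Lean document; each statement's English description precedes it below -/
import Mathlib

section
/- A discrete large-sample estimation problem has distinctive likelihoods if and only if every approximate maximum likelihood estimator on it is strongly consistent. (In particular, if the distinctive likelihood condition fails at some θ*, one can construct an approximate ML estimator that, with positive P_{θ*}-probability, lies outside a fixed neighbourhood of θ* infinitely often.) -/
open MeasureTheory ProbabilityTheory Filter Set Topology
open scoped ENNReal

/-- The cylinder event determined by the first `n` observations of `ω`. -/
def cylinder {Θ : Type*} {X : ℕ → Type*} (n : ℕ) (ω : Θ × (∀ i, X i)) :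
    Set (Θ × (∀ i, X i)) :=
  {ω' | ∀ i < n, ω'.2 i = ω.2 i}

/-!
If the likelihoods are distinctive and `θ̂ₙ` leaves a neighbourhood `U` of the true `θ` infinitely
often, then infinitely often the likelihood of `θ̂ₙ` is at most a fixed fraction `r < 1` of the
maximal one, so `θ̂` is not approximately ML.

Conversely, fix `U ∋ θ` and let `θ̂ₙ` raise an alarm whenever some parameter outside `U` beats the
fraction `1 - 1/(k+1)` of the maximal likelihood, `k` being the number of earlier alarms; it then
picks such a parameter, and otherwise any parameter reaching the fraction `1 - 1/(n+1)`. Either the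
alarms go on forever, or they stop and the fraction `1 - 1/(n+1)` takes over; in both cases `θ̂` is
approximately ML.
If `θ̂` is consistent at `θ`, it eventually stays in `U`, so the alarms stop after some `M`, and from
then on the likelihoods outside `U` are at most `1 - 1/(M+1)` times those inside `U`.
-/

noncomputable def threshold (k : ℕ) : ℝ≥0∞ := 1 - ((k : ℝ≥0∞) + 1)⁻¹

lemma threshold_lt_one (k : ℕ) : threshold k < 1 :=
  ENNReal.sub_lt_self ENNReal.one_ne_top one_ne_zero (ENNReal.inv_ne_zero.2 (by simp))

lemma tendsto_threshold_atTop : Tendsto threshold atTop (𝓝 1) := by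
  have h : Tendsto (fun k : ℕ => ((k : ℝ≥0∞) + 1)⁻¹) atTop (𝓝 0) := by
    simpa [Function.comp_def, add_comm] using
      ENNReal.tendsto_inv_nat_nhds_zero.comp (tendsto_add_atTop_nat 1)
  unfold threshold
  simpa using ENNReal.Tendsto.sub tendsto_const_nhds h (Or.inl ENNReal.one_ne_top)

lemma threshold_mono : Monotone threshold := fun _ _ h =>
  tsub_le_tsub_left (ENNReal.inv_le_inv.2 (by gcongr)) 1

lemma ENNReal.exists_mul_iSup_le {ι : Type*} [Nonempty ι] {f : ι → ℝ≥0∞} {c : ℝ≥0∞}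
    (hc : c < 1) (hf : ⨆ i, f i ≠ ∞) : ∃ i, c * ⨆ j, f j ≤ f i := by
  rcases eq_or_ne (⨆ i, f i) 0 with h | h
  · exact ⟨Classical.arbitrary ι, by simp [h]⟩
  · have hlt : c * ⨆ i, f i < ⨆ i, f i := by
      simpa using (ENNReal.mul_lt_mul_iff_left h hf).2 hc
    obtain ⟨i, hi⟩ := lt_iSup_iff.1 hlt
    exact ⟨i, hi.le⟩

lemma ENNReal.div_le_of_le_mul_sup {a b c : ℝ≥0∞} (hc : c < 1) (hb : b ≠ ∞)
    (h : b ≤ c * (a ⊔ b)) : b / a ≤ c := by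
  rcases le_total b a with hba | hab
  · rw [sup_eq_left.2 hba] at h
    exact ENNReal.div_le_of_le_mul h
  · rw [sup_eq_right.2 hab] at h
    have hb0 : b = 0 := by
      by_contra hb0
      exact h.not_gt (by simpa using (ENNReal.mul_lt_mul_iff_left hb0 hb).2 hc)
    simp [hb0]

section Tracking

variable {Θ : Type*}

def IsAlarm (ℓ : Θ → ℝ≥0∞) (U : Set Θ) (k : ℕ) : Prop := ∃ θ ∉ U, threshold k * ⨆ θ', ℓ θ' < ℓ θ

variable (L : ℕ → Θ → ℝ≥0∞) (U : Set Θ)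

open Classical in
noncomputable def alarmCount : ℕ → ℕ
  | 0 => 0
  | n + 1 => alarmCount n + if IsAlarm (L n) U (alarmCount n) then 1 else 0

open Classical in
noncomputable def trackingChoice [Nonempty Θ] (n : ℕ) : Θ :=
  if IsAlarm (L n) U (alarmCount L U n) then
    Classical.epsilon fun θ => θ ∉ U ∧ threshold (alarmCount L U n) * ⨆ θ', L n θ' < L n θ
  else Classical.epsilon fun θ => threshold n * ⨆ θ', L n θ' ≤ L n θ

variable {L U}

lemma alarmCount_succ_of_isAlarm {n : ℕ} (h : IsAlarm (L n) U (alarmCount L U n)) :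
    alarmCount L U (n + 1) = alarmCount L U n + 1 := by
  simp [alarmCount, h]

lemma alarmCount_succ_of_not_isAlarm {n : ℕ} (h : ¬IsAlarm (L n) U (alarmCount L U n)) :
    alarmCount L U (n + 1) = alarmCount L U n := by
  simp [alarmCount, h]

lemma alarmCount_succ_le (n : ℕ) : alarmCount L U (n + 1) ≤ alarmCount L U n + 1 := by
  by_cases h : IsAlarm (L n) U (alarmCount L U n)
  · rw [alarmCount_succ_of_isAlarm h]
  · rw [alarmCount_succ_of_not_isAlarm h]; omega

lemma monotone_alarmCount : Monotone (alarmCount L U) := by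
  refine monotone_nat_of_le_succ fun n => ?_
  by_cases h : IsAlarm (L n) U (alarmCount L U n)
  · rw [alarmCount_succ_of_isAlarm h]; omega
  · rw [alarmCount_succ_of_not_isAlarm h]

lemma alarmCount_le (n : ℕ) : alarmCount L U n ≤ n := by
  induction n with
  | zero => rfl
  | succ n ih => exact (alarmCount_succ_le n).trans (by omega)

lemma tendsto_alarmCount_atTop (h : ∃ᶠ n in atTop, IsAlarm (L n) U (alarmCount L U n)) :
    Tendsto (alarmCount L U) atTop atTop := by
  refine tendsto_atTop_atTop_of_monotone monotone_alarmCount fun b => ?_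
  induction b with
  | zero => exact ⟨0, Nat.zero_le _⟩
  | succ b ih =>
    obtain ⟨n, hn⟩ := ih
    obtain ⟨m, hnm, hm⟩ := frequently_atTop.1 h n
    refine ⟨m + 1, ?_⟩
    rw [alarmCount_succ_of_isAlarm hm]
    have := monotone_alarmCount (L := L) (U := U) hnm
    omega

lemma exists_eventually_alarmCount_eq
    (h : ∀ᶠ n in atTop, ¬IsAlarm (L n) U (alarmCount L U n)) :
    ∃ M, ∀ᶠ n in atTop, alarmCount L U n = M := by
  obtain ⟨N, hN⟩ := eventually_atTop.1 h
  refine ⟨alarmCount L U N, eventually_atTop.2 ⟨N, fun n hn => ?_⟩⟩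
  induction n, hn using Nat.le_induction with
  | base => rfl
  | succ n hn ih => rw [alarmCount_succ_of_not_isAlarm (hN n hn), ih]

lemma alarmCount_congr {L' : ℕ → Θ → ℝ≥0∞} {n : ℕ} (h : ∀ j < n, L j = L' j) :
    alarmCount L U n = alarmCount L' U n := by
  induction n with
  | zero => rfl
  | succ n ih =>
    have hn : alarmCount L U n = alarmCount L' U n := ih fun j hj => h j (by omega)
    rw [alarmCount, alarmCount, hn, h n n.lt_succ_self]

variable [Nonempty Θ]

lemma trackingChoice_congr {L' : ℕ → Θ → ℝ≥0∞} {n : ℕ} (h : ∀ j ≤ n, L j = L' j) :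
    trackingChoice L U n = trackingChoice L' U n := by
  rw [trackingChoice, trackingChoice, alarmCount_congr fun j hj => h j hj.le, h n le_rfl]

lemma trackingChoice_spec_of_isAlarm {n : ℕ} (h : IsAlarm (L n) U (alarmCount L U n)) :
    trackingChoice L U n ∉ U ∧
      threshold (alarmCount L U n) * ⨆ θ, L n θ < L n (trackingChoice L U n) := by
  rw [trackingChoice, if_pos h]
  exact Classical.epsilon_spec h

lemma trackingChoice_spec_of_not_isAlarm {n : ℕ} (h : ¬IsAlarm (L n) U (alarmCount L U n))
    (hfin : ⨆ θ, L n θ ≠ ∞) : threshold n * ⨆ θ, L n θ ≤ L n (trackingChoice L U n) := by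
  rw [trackingChoice, if_neg h]
  exact Classical.epsilon_spec (ENNReal.exists_mul_iSup_le (threshold_lt_one n) hfin)

lemma tendsto_trackingChoice_div_iSup (h0 : ∀ n, ⨆ θ, L n θ ≠ 0) (hfin : ∀ n, ⨆ θ, L n θ ≠ ∞) :
    Tendsto (fun n => L n (trackingChoice L U n) / ⨆ θ, L n θ) atTop (𝓝 1) := by
  have le_ratio : ∀ n k, threshold k * ⨆ θ, L n θ ≤ L n (trackingChoice L U n) →
      threshold k ≤ L n (trackingChoice L U n) / ⨆ θ, L n θ := fun n _ h =>
    (ENNReal.le_div_iff_mul_le (Or.inl (h0 n)) (Or.inl (hfin n))).2 h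
  have ratio_le_one : ∀ n, L n (trackingChoice L U n) / ⨆ θ, L n θ ≤ 1 := fun n =>
    ENNReal.div_le_of_le_mul (by simpa using le_iSup (L n) _)
  by_cases hfreq : ∃ᶠ n in atTop, IsAlarm (L n) U (alarmCount L U n)
  · refine tendsto_of_tendsto_of_tendsto_of_le_of_le
      (tendsto_threshold_atTop.comp (tendsto_alarmCount_atTop hfreq)) tendsto_const_nhds
      (fun n => ?_) ratio_le_one
    refine le_ratio n _ ?_
    by_cases h : IsAlarm (L n) U (alarmCount L U n)
    · exact (trackingChoice_spec_of_isAlarm h).2.le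
    · refine le_trans ?_ (trackingChoice_spec_of_not_isAlarm h (hfin n))
      gcongr
      exact threshold_mono (alarmCount_le n)
  · refine tendsto_of_tendsto_of_tendsto_of_le_of_le' tendsto_threshold_atTop tendsto_const_nhds
      ?_ (Eventually.of_forall ratio_le_one)
    filter_upwards [not_frequently.1 hfreq] with n hn
    exact le_ratio n n (trackingChoice_spec_of_not_isAlarm hn (hfin n))

lemma limsup_iSup_compl_div_iSup_lt_one (hfin : ∀ n, ⨆ θ ∈ Uᶜ, L n θ ≠ ∞)
    (h : ∀ᶠ n in atTop, trackingChoice L U n ∈ U) :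
    limsup (fun n => (⨆ θ ∈ Uᶜ, L n θ) / ⨆ θ ∈ U, L n θ) atTop < 1 := by
  obtain ⟨M, hM⟩ := exists_eventually_alarmCount_eq
    (h.mono fun n hn ha => (trackingChoice_spec_of_isAlarm ha).1 hn)
  refine (limsup_le_of_le (by isBoundedDefault) ?_).trans_lt (threshold_lt_one M)
  filter_upwards [h, hM] with n hn hMn
  have no_alarm : ¬IsAlarm (L n) U M := fun ha =>
    (trackingChoice_spec_of_isAlarm (hMn ▸ ha)).1 hn
  refine ENNReal.div_le_of_le_mul_sup (threshold_lt_one M) (hfin n) ?_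
  have hsplit : ⨆ θ, L n θ = (⨆ θ ∈ U, L n θ) ⊔ ⨆ θ ∈ Uᶜ, L n θ := iSup_split _ _
  rw [← hsplit]
  exact iSup₂_le fun θ hθ => not_lt.1 fun hlt => no_alarm ⟨θ, hθ, hlt⟩

end Tracking

lemma eventually_mem_of_liminf_div_iSup_eq_one {Θ : Type*} {L : ℕ → Θ → ℝ≥0∞} {est : ℕ → Θ}
    {U : Set Θ} (hML : liminf (fun n => L n (est n) / ⨆ θ, L n θ) atTop = 1)
    (hDL : limsup (fun n => (⨆ θ ∈ Uᶜ, L n θ) / ⨆ θ ∈ U, L n θ) atTop < 1) :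
    ∀ᶠ n in atTop, est n ∈ U := by
  by_contra hev
  obtain ⟨r, hDLr, hr⟩ := exists_between hDL
  have hfreq : ∃ᶠ n in atTop, L n (est n) / ⨆ θ, L n θ ≤ r := by
    refine ((not_eventually.1 hev).and_eventually (eventually_lt_of_limsup_lt hDLr)).mono ?_
    rintro n ⟨hn, hratio⟩
    calc L n (est n) / ⨆ θ, L n θ ≤ (⨆ θ ∈ Uᶜ, L n θ) / ⨆ θ, L n θ :=
          ENNReal.div_le_div_right (le_biSup (L n) hn) _
      _ ≤ (⨆ θ ∈ Uᶜ, L n θ) / ⨆ θ ∈ U, L n θ :=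
          ENNReal.div_le_div_left (iSup₂_le fun θ _ => le_iSup (L n) θ) _
      _ ≤ r := hratio.le
  exact (hML.symm.trans_le (liminf_le_of_frequently_le' hfreq)).not_gt hr

lemma ae_measure_preimage_singleton_ne_zero {Ω β : Type*} [MeasurableSpace Ω] [Countable β]
    (μ : Measure Ω) (f : Ω → β) : ∀ᵐ ω ∂μ, μ (f ⁻¹' {f ω}) ≠ 0 := by
  refine measure_mono_null
    (fun ω (hω : ¬μ (f ⁻¹' {f ω}) ≠ 0) => mem_iUnion₂.2 ⟨f ω, not_not.1 hω, rfl⟩)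
    ((measure_biUnion_null_iff (to_countable {b | μ (f ⁻¹' {b}) = 0})).2 fun _ hb => hb)

lemma iSup_cond_preimage_singleton_ne_zero {Ω α : Type*} [MeasurableSpace Ω] [Countable α]
    [MeasurableSpace α] [MeasurableSingletonClass α] {f : Ω → α} (hf : Measurable f)
    {μ : Measure Ω} [IsFiniteMeasure μ] {s : Set Ω} (hs : μ s ≠ 0) :
    ⨆ a, μ[s | f ⁻¹' {a}] ≠ 0 := by
  intro h
  have hcover : s ⊆ ⋃ a, f ⁻¹' {a} ∩ s := fun ω hω => mem_iUnion.2 ⟨f ω, rfl, hω⟩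
  refine hs (measure_mono_null hcover (measure_iUnion_null fun a => ?_))
  by_contra ha
  exact (cond_pos_of_inter_ne_zero (hf (measurableSet_singleton a)) ha).ne'
    (ENNReal.iSup_eq_zero.1 h a)

section Likelihood

variable {Θ : Type*} [MeasurableSpace Θ] {X : ℕ → Type*} [∀ n, MeasurableSpace (X n)]

-- `likelihood μ ω.2 n θ` is definitionally `μ[|Prod.fst ⁻¹' {θ}] (cylinder n ω)`; it is a function
-- of the observations `x` alone, as an estimator must be.
noncomputable def likelihood (μ : Measure (Θ × ∀ i, X i)) (x : ∀ i, X i) (n : ℕ) (θ : Θ) :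
    ℝ≥0∞ :=
  μ[|Prod.fst ⁻¹' {θ}] {ω | ∀ i < n, ω.2 i = x i}

lemma likelihood_congr (μ : Measure (Θ × ∀ i, X i)) {x y : ∀ i, X i} {n : ℕ}
    (h : ∀ i < n, x i = y i) : ∀ j ≤ n, likelihood μ x j = likelihood μ y j := by
  intro j hj
  ext θ
  unfold likelihood
  congr 2
  ext ω
  exact forall₂_congr fun i hi => by rw [h i (by omega)]

lemma likelihood_le_one (μ : Measure (Θ × ∀ i, X i)) (x : ∀ i, X i) (n : ℕ) (θ : Θ) :
    likelihood μ x n θ ≤ 1 :=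
  prob_le_one

lemma biSup_likelihood_ne_top (μ : Measure (Θ × ∀ i, X i)) (x : ∀ i, X i) (n : ℕ) (s : Set Θ) :
    ⨆ θ ∈ s, likelihood μ x n θ ≠ ∞ :=
  ne_top_of_le_ne_top ENNReal.one_ne_top (iSup₂_le fun θ _ => likelihood_le_one μ x n θ)

lemma iSup_likelihood_ne_top (μ : Measure (Θ × ∀ i, X i)) (x : ∀ i, X i) (n : ℕ) :
    ⨆ θ, likelihood μ x n θ ≠ ∞ :=
  ne_top_of_le_ne_top ENNReal.one_ne_top (iSup_le fun θ => likelihood_le_one μ x n θ)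

lemma ae_iSup_likelihood_ne_zero [Countable Θ] [MeasurableSingletonClass Θ]
    [∀ n, Countable (X n)] (μ : Measure (Θ × ∀ i, X i)) [IsFiniteMeasure μ] :
    ∀ᵐ ω ∂μ, ∀ n, ⨆ θ, likelihood μ ω.2 n θ ≠ 0 := by
  refine ae_all_iff.2 fun n => ?_
  filter_upwards [ae_measure_preimage_singleton_ne_zero μ fun ω (i : Fin n) => ω.2 i] with ω hω
  have hcylinder : (fun (ω' : Θ × ∀ i, X i) (i : Fin n) => ω'.2 i) ⁻¹' {fun i : Fin n => ω.2 i} =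
      {ω' | ∀ i < n, ω'.2 i = ω.2 i} := by
    ext ω'
    exact ⟨fun h i hi => congr_fun h ⟨i, hi⟩, fun h => funext fun i => h i i.2⟩
  exact iSup_cond_preimage_singleton_ne_zero measurable_fst (hcylinder ▸ hω)

lemma ae_tendsto_likelihood_trackingChoice_div_iSup [Nonempty Θ] [Countable Θ]
    [MeasurableSingletonClass Θ] [∀ n, Countable (X n)] (μ : Measure (Θ × ∀ i, X i))
    [IsFiniteMeasure μ] (U : Set Θ) :
    ∀ᵐ ω ∂μ, Tendsto (fun n => likelihood μ ω.2 n (trackingChoice (likelihood μ ω.2) U n) /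
      ⨆ θ, likelihood μ ω.2 n θ) atTop (𝓝 1) := by
  filter_upwards [ae_iSup_likelihood_ne_zero μ] with ω hω
  exact tendsto_trackingChoice_div_iSup hω (iSup_likelihood_ne_top μ ω.2)

end Likelihood

theorem distinctive_likelihoods_iff_approximate_ml_strongly_consistent_general
    {Θ : Type*} [Countable Θ] [Nonempty Θ] [MeasurableSpace Θ] [DiscreteMeasurableSpace Θ]
    [TopologicalSpace Θ] [FirstCountableTopology Θ]
    {X : ℕ → Type*} [∀ n, Countable (X n)] [∀ n, MeasurableSpace (X n)]
    (μ : Measure (Θ × (∀ i, X i))) [IsProbabilityMeasure μ] :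
    -- distinctive likelihoods
    (∀ θ : Θ, ∀ U ∈ 𝓝 θ,
        ∀ᵐ ω ∂(μ[|Prod.fst ⁻¹' {θ}]),
          limsup
            (fun n : ℕ =>
              (⨆ θ' ∈ Uᶜ, (μ[|Prod.fst ⁻¹' {θ'}]) (cylinder n ω)) /
                ⨆ θtilde ∈ U, (μ[|Prod.fst ⁻¹' {θtilde}]) (cylinder n ω))
            atTop < 1)
      ↔
    -- every approximate maximum likelihood estimator is strongly consistent
    (∀ est : (n : ℕ) → (∀ i, X i) → Θ,
        (∀ n (x y : ∀ i, X i), (∀ i < n, x i = y i) → est n x = est n y) →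
        (∀ᵐ ω ∂μ,
            liminf
              (fun n : ℕ =>
                (μ[|Prod.fst ⁻¹' {est n ω.2}]) (cylinder n ω) /
                  ⨆ θ' : Θ, (μ[|Prod.fst ⁻¹' {θ'}]) (cylinder n ω))
              atTop = 1) →
        ∀ θ : Θ, ∀ᵐ ω ∂(μ[|Prod.fst ⁻¹' {θ}]),
            Tendsto (fun n : ℕ => est n ω.2) atTop (𝓝 θ)) := by
  constructor
  · intro hDL est _ hML θ
    obtain ⟨B, hB⟩ := (𝓝 θ).exists_antitone_basis
    filter_upwards [cond_absolutelyContinuous.ae_le hML,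
      ae_all_iff.2 fun k => hDL θ (B k) (hB.mem k)] with ω hMLω hDLω
    exact hB.tendsto_right_iff.2 fun k _ =>
      eventually_mem_of_liminf_div_iSup_eq_one (L := likelihood μ ω.2) hMLω (hDLω k)
  · intro hcons θ U hU
    have hML := ae_tendsto_likelihood_trackingChoice_div_iSup μ U
    filter_upwards [hcons (fun n x => trackingChoice (likelihood μ x) U n)
      (fun n x y h => trackingChoice_congr (likelihood_congr μ h))
      (hML.mono fun ω h => h.liminf_eq) θ] with ω hω
    exact limsup_iSup_compl_div_iSup_lt_one (biSup_likelihood_ne_top μ ω.2 · Uᶜ)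
      (hω.eventually_mem hU)

/-- A discrete large-sample estimation problem has distinctive likelihoods iff every
approximate maximum likelihood estimator on it is strongly consistent. -/
theorem distinctive_likelihoods_iff_approximate_ml_strongly_consistent
    {Θ : Type*} [Countable Θ] [Nonempty Θ] [MeasurableSpace Θ] [DiscreteMeasurableSpace Θ]
    [TopologicalSpace Θ] [T1Space Θ] [FirstCountableTopology Θ]
    {X : ℕ → Type*} [∀ n, Countable (X n)] [∀ n, MeasurableSpace (X n)]
    [∀ n, DiscreteMeasurableSpace (X n)]
    (μ : Measure (Θ × (∀ i, X i))) [IsProbabilityMeasure μ]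
    (hprior : ∀ θ : Θ, 0 < μ (Prod.fst ⁻¹' {θ})) :
    -- distinctive likelihoods
    (∀ θ : Θ, ∀ U ∈ 𝓝 θ,
        ∀ᵐ ω ∂(μ[|Prod.fst ⁻¹' {θ}]),
          limsup
            (fun n : ℕ =>
              (⨆ θ' ∈ Uᶜ, (μ[|Prod.fst ⁻¹' {θ'}]) (cylinder n ω)) /
                ⨆ θtilde ∈ U, (μ[|Prod.fst ⁻¹' {θtilde}]) (cylinder n ω))
            atTop < 1)
      ↔
    -- every approximate maximum likelihood estimator is strongly consistent
    (∀ est : (n : ℕ) → (∀ i, X i) → Θ,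
        (∀ n (x y : ∀ i, X i), (∀ i < n, x i = y i) → est n x = est n y) →
        (∀ᵐ ω ∂μ,
            liminf
              (fun n : ℕ =>
                (μ[|Prod.fst ⁻¹' {est n ω.2}]) (cylinder n ω) /
                  ⨆ θ' : Θ, (μ[|Prod.fst ⁻¹' {θ'}]) (cylinder n ω))
              atTop = 1) →
        ∀ θ : Θ, ∀ᵐ ω ∂(μ[|Prod.fst ⁻¹' {θ}]),
            Tendsto (fun n : ℕ => est n ω.2) atTop (𝓝 θ)) :=
  distinctive_likelihoods_iff_approximate_ml_strongly_consistent_general μ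
end

section
/- If an estimator θ̂_n has zero excess expected message length (I₂(θ̂_n) = 0), then for any two distinct θ₁, θ₂ ∈ Θ with P(θ̂_n = θ₁) > 0 and P(θ̂_n = θ₂) > 0, the supports of P_{θ₁}^{(1:n)} and P_{θ₂}^{(1:n)} are disjoint; consequently the supports {supp(P_θ^{(1:n)}) : P(θ̂_n = θ) > 0} form a partition of supp(x_{1:n}). -/
open MeasureTheory ProbabilityTheory Set
open scoped ENNReal

/-!
Write `p x` for the probability of the data `x`, `r θ = P(θ̂ = θ)` and `q x = P_{θ̂ x}(x)`.
Grouping the data by the value of the estimate, the entropy of `θ̂` equals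
`∑ₓ p x · (-log r (θ̂ x))`, so `I₂ = ∑ₓ p x · log (p x / (q x · r (θ̂ x)))`. Gibbs' inequality
bounds this from below by `1 - ∑ₓ q x · r (θ̂ x) = 1 - ∑_θ r θ · P_θ(θ̂ = θ) ≥ 0`, so `I₂ = 0`
forces `P_θ(θ̂ = θ) = 1` for every `θ` with `r θ > 0`: each such `P_θ` only charges data estimated
as `θ`, which makes the supports disjoint. They cover the data because `I₂ < ∞` forces
`q x > 0` wherever `p x > 0`.
-/

lemma Real.sub_le_mul_log_div {p s : ℝ} (hp : 0 < p) (hs : 0 < s) :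
    p - s ≤ p * Real.log (p / s) := by
  have h := mul_le_mul_of_nonneg_left (Real.one_sub_inv_le_log_of_pos (div_pos hp hs)) hp.le
  rwa [inv_div, mul_sub, mul_one, mul_div_cancel₀ _ hp.ne'] at h

theorem sub_le_of_hasSum_mul_log_div {ι : Type*} {p s : ι → ℝ} {P S D : ℝ}
    (hp : ∀ i, 0 ≤ p i) (hs : ∀ i, 0 ≤ s i) (hps : ∀ i, 0 < p i → 0 < s i) (hP : HasSum p P)
    (hS : HasSum s S) (hD : HasSum (fun i ↦ p i * Real.log (p i / s i)) D) : P - S ≤ D := by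
  refine hasSum_le (fun i ↦ ?_) (hP.sub hS) hD
  rcases (hp i).eq_or_lt with hpi | hpi
  · simp [← hpi, hs i]
  · exact Real.sub_le_mul_log_div hpi (hps i hpi)

theorem ENNReal.hasSum_of_tsum_ofReal_ne_top {ι : Type*} {f : ι → ℝ}
    (hpos : ∑' i, ENNReal.ofReal (f i) ≠ ∞) (hneg : ∑' i, ENNReal.ofReal (-f i) ≠ ∞) :
    HasSum f ((∑' i, ENNReal.ofReal (f i)).toReal - (∑' i, ENNReal.ofReal (-f i)).toReal) := by
  have h := (ENNReal.hasSum_toReal hpos).sub (ENNReal.hasSum_toReal hneg)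
  rw [← ENNReal.tsum_toReal_eq fun _ ↦ ENNReal.ofReal_ne_top,
    ← ENNReal.tsum_toReal_eq fun _ ↦ ENNReal.ofReal_ne_top] at h
  simpa only [ENNReal.toReal_ofReal', max_zero_sub_max_neg_zero_eq_self] using h

theorem ENNReal.tsum_comp_fiberwise {β γ : Type*} (g : β → γ) (F : γ → β → ℝ≥0∞) :
    ∑' b, F (g b) b = ∑' c, ∑' b : g ⁻¹' {c}, F c b := by
  rw [← ENNReal.tsum_fiberwise _ g]
  refine tsum_congr fun c ↦ tsum_congr fun b ↦ ?_
  rw [show g b = c from b.2]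

theorem ENNReal.eq_one_of_tsum_le_tsum_mul {ι : Type*} {a c : ι → ℝ≥0∞}
    (ha : ∑' i, a i ≠ ∞) (hc : ∀ i, c i ≤ 1) (h : ∑' i, a i ≤ ∑' i, c i * a i) {i : ι}
    (hi : a i ≠ 0) : c i = 1 := by
  by_contra hne
  have hca : ∀ j, c j * a j ≤ a j := fun j ↦ mul_le_of_le_one_left' (hc j)
  have hlt : c i * a i < a i := by
    simpa using (ENNReal.mul_lt_mul_iff_left hi (ENNReal.ne_top_of_tsum_ne_top ha i)).2
      ((hc i).lt_of_ne hne)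
  exact (ENNReal.tsum_lt_tsum (ne_top_of_le_ne_top ha (ENNReal.tsum_le_tsum hca)) hca hlt).not_ge h

theorem ENNReal.not_of_tsum_ite_top_ne_top {ι : Type*} {P : ι → Prop} [DecidablePred P]
    {g : ι → ℝ≥0∞} (h : ∑' i, (if P i then ∞ else g i) ≠ ∞) (i : ι) : ¬P i := fun hi ↦ by
  simpa [hi] using ENNReal.ne_top_of_tsum_ne_top h i

theorem ENNReal.tsum_ite_top_eq_of_ne_top {ι : Type*} {P : ι → Prop} [DecidablePred P]
    {g : ι → ℝ≥0∞} (h : ∑' i, (if P i then ∞ else g i) ≠ ∞) :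
    ∑' i, (if P i then ∞ else g i) = ∑' i, g i :=
  tsum_congr fun i ↦ if_neg (ENNReal.not_of_tsum_ite_top_ne_top h i)

theorem one_le_tsum_mul_of_excess_eq_zero {X : Type*} {p q r : X → ℝ≥0∞} {D H : ℝ}
    (hp : ∑' x, p x = 1) (hpr : ∀ x, p x ≤ r x) (hr : ∀ x, r x ≠ ∞) (hq : ∀ x, q x ≠ ∞)
    (hpq : ∀ x, 0 < p x → 0 < q x) (hqr : ∑' x, q x * r x ≠ ∞)
    (hD : HasSum (fun x ↦ (p x).toReal * Real.log ((p x).toReal / (q x).toReal)) D)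
    (hH : HasSum (fun x ↦ (p x).toReal * -Real.log (r x).toReal) H) (h0 : D + H = 0) :
    1 ≤ ∑' x, q x * r x := by
  have hP : HasSum (fun x ↦ (p x).toReal) 1 := by
    have h := ENNReal.hasSum_toReal (hp ▸ ENNReal.one_ne_top)
    rwa [← ENNReal.tsum_toReal_eq (ENNReal.ne_top_of_tsum_ne_top (hp ▸ ENNReal.one_ne_top)), hp,
      ENNReal.toReal_one] at h
  have hS : HasSum (fun x ↦ (q x).toReal * (r x).toReal) (∑' x, q x * r x).toReal := by
    simp_rw [← ENNReal.toReal_mul]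
    rw [ENNReal.tsum_toReal_eq fun x ↦ ENNReal.mul_ne_top (hq x) (hr x)]
    exact ENNReal.hasSum_toReal hqr
  have hpos : ∀ x, 0 < (p x).toReal → 0 < (q x).toReal ∧ 0 < (r x).toReal := fun x hx ↦ by
    have hpx := (ENNReal.toReal_pos_iff.1 hx).1
    exact ⟨ENNReal.toReal_pos (hpq x hpx).ne' (hq x),
      ENNReal.toReal_pos (hpx.trans_le (hpr x)).ne' (hr x)⟩
  have hsplit : ∀ x, (p x).toReal * Real.log ((p x).toReal / ((q x).toReal * (r x).toReal)) =
      (p x).toReal * Real.log ((p x).toReal / (q x).toReal) +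
        (p x).toReal * -Real.log (r x).toReal := fun x ↦ by
    rcases (ENNReal.toReal_nonneg (a := p x)).eq_or_lt with hx | hx
    · simp [← hx]
    obtain ⟨hqx, hrx⟩ := hpos x hx
    rw [Real.log_div hx.ne' (mul_pos hqx hrx).ne', Real.log_div hx.ne' hqx.ne',
      Real.log_mul hqx.ne' hrx.ne']
    ring
  have h := sub_le_of_hasSum_mul_log_div (fun _ ↦ ENNReal.toReal_nonneg) (fun _ ↦ by positivity)
    (fun x hx ↦ mul_pos (hpos x hx).1 (hpos x hx).2) hP hS
    (by simpa only [hsplit] using hD.add hH)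
  rw [h0, sub_nonpos] at h
  simpa using (ENNReal.ofReal_le_ofReal h).trans_eq (ENNReal.ofReal_toReal hqr)

theorem nonempty_inter_of_prob_eq_one {α : Type*} [MeasurableSpace α] {ν : Measure α}
    [IsZeroOrProbabilityMeasure ν] {s t : Set α} (hs : MeasurableSet s) (hs1 : ν s = 1)
    (ht : ν t ≠ 0) : (t ∩ s).Nonempty := by
  have : IsProbabilityMeasure ν := ⟨le_antisymm prob_le_one (hs1 ▸ measure_mono (subset_univ s))⟩
  refine nonempty_of_measure_ne_zero (μ := ν) ?_
  rwa [measure_inter_conull ((prob_compl_eq_zero_iff hs).2 hs1)]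

theorem tsum_measure_preimage_singleton_mul {α X Θ : Type*} [MeasurableSpace α]
    [MeasurableSpace X] [Countable X] [MeasurableSingletonClass X] {g : α → X}
    (hg : Measurable g) (ν : Θ → Measure α) (est : X → Θ) (φ : Θ → ℝ≥0∞) :
    ∑' x, ν (est x) (g ⁻¹' {x}) * φ (est x) = ∑' θ, ν θ {a | est (g a) = θ} * φ θ := by
  rw [ENNReal.tsum_comp_fiberwise est fun θ x ↦ ν θ (g ⁻¹' {x}) * φ θ]
  refine tsum_congr fun θ ↦ ?_
  rw [ENNReal.tsum_mul_right, tsum_measure_preimage_singleton (to_countable _)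
    fun x _ ↦ hg (measurableSet_singleton x)]
  rfl

section

variable {Θ X : Type*} [MeasurableSpace Θ] [MeasurableSpace X]

theorem measure_snd_singleton_le_measure_est (μ : Measure (Θ × X)) (est : X → Θ) (x : X) :
    μ (Prod.snd ⁻¹' {x}) ≤ μ {ω | est ω.2 = est x} :=
  measure_mono fun _ hω ↦ congrArg est hω

theorem eq_of_measure_snd_singleton_ne_zero [DiscreteMeasurableSpace X] {ν : Measure (Θ × X)}
    [IsZeroOrProbabilityMeasure ν] {est : X → Θ} {θ : Θ} {x : X}
    (h1 : ν {ω | est ω.2 = θ} = 1) (hx : ν (Prod.snd ⁻¹' {x}) ≠ 0) : est x = θ := by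
  obtain ⟨ω, hωx, hωθ⟩ := nonempty_inter_of_prob_eq_one
    (measurable_snd (MeasurableSet.of_discrete (s := est ⁻¹' {θ}))) h1 hx
  exact hωx ▸ hωθ

variable [Countable X] [MeasurableSingletonClass X] (μ : Measure (Θ × X)) [IsProbabilityMeasure μ]
  (est : X → Θ)

theorem tsum_measure_snd_singleton : ∑' x, μ (Prod.snd ⁻¹' {x}) = 1 := by
  rw [← tsum_univ, tsum_measure_preimage_singleton countable_univ
    fun x _ ↦ measurable_snd (measurableSet_singleton x), preimage_univ, measure_univ]

theorem tsum_measure_est : ∑' θ, μ {ω | est ω.2 = θ} = 1 := by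
  simpa [tsum_measure_snd_singleton] using
    (tsum_measure_preimage_singleton_mul measurable_snd (fun _ ↦ μ) est 1).symm

theorem hasSum_mul_neg_log_measure_est
    (hH : ∑' θ, ENNReal.ofReal (Real.negMulLog (μ {ω | est ω.2 = θ}).toReal) ≠ ∞) :
    HasSum (fun x ↦ (μ (Prod.snd ⁻¹' {x})).toReal * -Real.log (μ {ω | est ω.2 = est x}).toReal)
      (∑' θ, ENNReal.ofReal (Real.negMulLog (μ {ω | est ω.2 = θ}).toReal)).toReal := by
  have hterm : ∀ θ, ENNReal.ofReal (Real.negMulLog (μ {ω | est ω.2 = θ}).toReal) =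
      μ {ω | est ω.2 = θ} * ENNReal.ofReal (-Real.log (μ {ω | est ω.2 = θ}).toReal) := fun θ ↦ by
    rw [Real.negMulLog, neg_mul_comm, ENNReal.ofReal_mul ENNReal.toReal_nonneg,
      ENNReal.ofReal_toReal (measure_ne_top _ _)]
  simp_rw [hterm] at hH ⊢
  rw [← tsum_measure_preimage_singleton_mul measurable_snd (fun _ ↦ μ) est] at hH ⊢
  rw [ENNReal.tsum_toReal_eq fun x ↦ ENNReal.mul_ne_top (measure_ne_top _ _) ENNReal.ofReal_ne_top]
  convert ENNReal.hasSum_toReal hH using 2 with x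
  rw [ENNReal.toReal_mul, ENNReal.toReal_ofReal]
  exact neg_nonneg.2 (Real.log_nonpos ENNReal.toReal_nonneg measureReal_le_one)

theorem cond_measure_est_eq_one_of_excess_eq_zero {D H : ℝ}
    (hq : ∀ x, 0 < μ (Prod.snd ⁻¹' {x}) → 0 < μ[|Prod.fst ⁻¹' {est x}] (Prod.snd ⁻¹' {x}))
    (hD : HasSum (fun x ↦ (μ (Prod.snd ⁻¹' {x})).toReal * Real.log ((μ (Prod.snd ⁻¹' {x})).toReal /
      (μ[|Prod.fst ⁻¹' {est x}] (Prod.snd ⁻¹' {x})).toReal)) D)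
    (hH : HasSum (fun x ↦
      (μ (Prod.snd ⁻¹' {x})).toReal * -Real.log (μ {ω | est ω.2 = est x}).toReal) H)
    (h0 : D + H = 0) (θ : Θ) (hθ : μ {ω | est ω.2 = θ} ≠ 0) :
    μ[|Prod.fst ⁻¹' {θ}] {ω | est ω.2 = θ} = 1 := by
  have hmass := tsum_measure_preimage_singleton_mul measurable_snd
    (fun θ ↦ μ[|Prod.fst ⁻¹' {θ}]) est fun θ ↦ μ {ω | est ω.2 = θ}
  have hmass_le : ∑' θ, μ[|Prod.fst ⁻¹' {θ}] {ω | est ω.2 = θ} * μ {ω | est ω.2 = θ} ≤ 1 :=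
    (tsum_measure_est μ est).symm ▸ ENNReal.tsum_le_tsum fun _ ↦ mul_le_of_le_one_left' prob_le_one
  have h1 := one_le_tsum_mul_of_excess_eq_zero (tsum_measure_snd_singleton μ)
    (measure_snd_singleton_le_measure_est μ est) (fun _ ↦ measure_ne_top _ _)
    (fun _ ↦ measure_ne_top _ _) hq (hmass ▸ ne_top_of_le_ne_top ENNReal.one_ne_top hmass_le)
    hD hH h0
  rw [hmass, ← tsum_measure_est μ est] at h1
  exact ENNReal.eq_one_of_tsum_le_tsum_mul ((tsum_measure_est μ est).symm ▸ ENNReal.one_ne_top)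
    (fun _ ↦ prob_le_one) h1 hθ

end

theorem supports_partition_of_zero_excess_message_length_general
    {Θ : Type*} [MeasurableSpace Θ]
    {X : Type*} [Countable X] [MeasurableSpace X] [DiscreteMeasurableSpace X]
    (μ : Measure (Θ × X)) [IsProbabilityMeasure μ]
    (est : X → Θ)
    (Hpart : ℝ≥0∞)
    (hH : Hpart = ∑' θ : Θ,
        ENNReal.ofReal (Real.negMulLog ((μ {ω : Θ × X | est ω.2 = θ}).toReal)))
    (Spos Sneg : ℝ≥0∞)
    (hSpos : Spos = ∑' x : X,
        if 0 < (μ (Prod.snd ⁻¹' {x})).toReal ∧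
            ((μ[|Prod.fst ⁻¹' {est x}]) (Prod.snd ⁻¹' {x})).toReal = 0
        then (⊤ : ℝ≥0∞)
        else ENNReal.ofReal ((μ (Prod.snd ⁻¹' {x})).toReal *
          Real.log ((μ (Prod.snd ⁻¹' {x})).toReal /
            ((μ[|Prod.fst ⁻¹' {est x}]) (Prod.snd ⁻¹' {x})).toReal)))
    (hSneg : Sneg = ∑' x : X,
        ENNReal.ofReal (-((μ (Prod.snd ⁻¹' {x})).toReal *
          Real.log ((μ (Prod.snd ⁻¹' {x})).toReal /
            ((μ[|Prod.fst ⁻¹' {est x}]) (Prod.snd ⁻¹' {x})).toReal))))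
    (hfin : Sneg ≠ ⊤)
    -- zero excess expected message length: I₂ = 0
    (hzero : Hpart + Spos = Sneg) :
    -- supports of distinct estimates of positive probability are disjoint
    (∀ θ₁ θ₂ : Θ, θ₁ ≠ θ₂ →
        0 < μ {ω : Θ × X | est ω.2 = θ₁} → 0 < μ {ω : Θ × X | est ω.2 = θ₂} →
        {x : X | 0 < (μ[|Prod.fst ⁻¹' {θ₁}]) (Prod.snd ⁻¹' {x})} ∩
          {x : X | 0 < (μ[|Prod.fst ⁻¹' {θ₂}]) (Prod.snd ⁻¹' {x})} = ∅) ∧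
    -- and they cover the support of the data distribution
    (∀ x : X, 0 < μ (Prod.snd ⁻¹' {x}) →
        ∃ θ : Θ, 0 < μ {ω : Θ × X | est ω.2 = θ} ∧
          0 < (μ[|Prod.fst ⁻¹' {θ}]) (Prod.snd ⁻¹' {x})) := by
  obtain ⟨hH_fin, hSpos_fin⟩ := ENNReal.add_ne_top.1 (hzero ▸ hfin)
  have hsum_fin := hSpos ▸ hSpos_fin
  have hcond_pos : ∀ x, 0 < μ (Prod.snd ⁻¹' {x}) →
      0 < μ[|Prod.fst ⁻¹' {est x}] (Prod.snd ⁻¹' {x}) := fun x hx ↦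
    pos_iff_ne_zero.2 fun h0 ↦ ENNReal.not_of_tsum_ite_top_ne_top hsum_fin x
      ⟨ENNReal.toReal_pos hx.ne' (measure_ne_top _ _), by rw [h0, ENNReal.toReal_zero]⟩
  rw [ENNReal.tsum_ite_top_eq_of_ne_top hsum_fin] at hSpos
  have hD := ENNReal.hasSum_of_tsum_ofReal_ne_top (hSpos ▸ hSpos_fin) (hSneg ▸ hfin)
  rw [← hSpos, ← hSneg] at hD
  have hmass := cond_measure_est_eq_one_of_excess_eq_zero μ est hcond_pos hD
    (hasSum_mul_neg_log_measure_est μ est (hH ▸ hH_fin))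
    (by rw [← hH, ← hzero, ENNReal.toReal_add hH_fin hSpos_fin]; ring)
  refine ⟨fun θ₁ θ₂ hne h₁ h₂ ↦ eq_empty_of_forall_notMem fun x ⟨hx₁, hx₂⟩ ↦ hne ?_,
    fun x hx ↦ ⟨est x, hx.trans_le (measure_snd_singleton_le_measure_est μ est x), hcond_pos x hx⟩⟩
  exact (eq_of_measure_snd_singleton_ne_zero (hmass _ h₁.ne') hx₁.ne').symm.trans
    (eq_of_measure_snd_singleton_ne_zero (hmass _ h₂.ne') hx₂.ne')

/-- If an estimator has zero excess expected message length (`I₂ = 0`, expressed via the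
positive part `Spos`, negative part `Sneg` of the data sum and the entropy `Hpart` as
`Hpart + Spos = Sneg` with `Sneg` finite), then the supports of the model distributions
corresponding to two distinct estimates of positive probability are disjoint, and these
supports cover the support of the data distribution (hence form a partition of it). -/
theorem supports_partition_of_zero_excess_message_length
    {Θ : Type*} [Countable Θ] [MeasurableSpace Θ] [DiscreteMeasurableSpace Θ]
    {X : Type*} [Countable X] [MeasurableSpace X] [DiscreteMeasurableSpace X]
    (μ : Measure (Θ × X)) [IsProbabilityMeasure μ]
    (est : X → Θ)
    (Hpart : ℝ≥0∞)
    (hH : Hpart = ∑' θ : Θ,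
        ENNReal.ofReal (Real.negMulLog ((μ {ω : Θ × X | est ω.2 = θ}).toReal)))
    (Spos Sneg : ℝ≥0∞)
    (hSpos : Spos = ∑' x : X,
        if 0 < (μ (Prod.snd ⁻¹' {x})).toReal ∧
            ((μ[|Prod.fst ⁻¹' {est x}]) (Prod.snd ⁻¹' {x})).toReal = 0
        then (⊤ : ℝ≥0∞)
        else ENNReal.ofReal ((μ (Prod.snd ⁻¹' {x})).toReal *
          Real.log ((μ (Prod.snd ⁻¹' {x})).toReal /
            ((μ[|Prod.fst ⁻¹' {est x}]) (Prod.snd ⁻¹' {x})).toReal)))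
    (hSneg : Sneg = ∑' x : X,
        ENNReal.ofReal (-((μ (Prod.snd ⁻¹' {x})).toReal *
          Real.log ((μ (Prod.snd ⁻¹' {x})).toReal /
            ((μ[|Prod.fst ⁻¹' {est x}]) (Prod.snd ⁻¹' {x})).toReal))))
    (hfin : Sneg ≠ ⊤)
    -- zero excess expected message length: I₂ = 0
    (hzero : Hpart + Spos = Sneg) :
    -- supports of distinct estimates of positive probability are disjoint
    (∀ θ₁ θ₂ : Θ, θ₁ ≠ θ₂ →
        0 < μ {ω : Θ × X | est ω.2 = θ₁} → 0 < μ {ω : Θ × X | est ω.2 = θ₂} →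
        {x : X | 0 < (μ[|Prod.fst ⁻¹' {θ₁}]) (Prod.snd ⁻¹' {x})} ∩
          {x : X | 0 < (μ[|Prod.fst ⁻¹' {θ₂}]) (Prod.snd ⁻¹' {x})} = ∅) ∧
    -- and they cover the support of the data distribution
    (∀ x : X, 0 < μ (Prod.snd ⁻¹' {x}) →
        ∃ θ : Θ, 0 < μ {ω : Θ × X | est ω.2 = θ} ∧
          0 < (μ[|Prod.fst ⁻¹' {θ}]) (Prod.snd ⁻¹' {x})) :=
  supports_partition_of_zero_excess_message_length_general μ est Hpart hH Spos Sneg hSpos hSneg hfin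
    hzero
end
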